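/- Over a model M in the signature of arithmetic, the inclusion logic sentence ∃x∃y(y ⊆ x ∧ y < x) is true (i.e., satisfied by the team {∅}) if and only if the relation <^M is not well-founded, i.e., M contains an infinite <-descending chain. -/

import Mathlib

namespace TeamSem

variable {M : Type}

/-- A team is a set of assignments (variables are natural numbers). -/
abbrev Team (M : Type) := Set (ℕ → M)

/-- Lax existential extension of a team `X` along variable `x` by a choice function `F`. -/
def extT (X : Team M) (x : ℕ) (F : (ℕ → M) → Set M) : Team M :=
  {t | ∃ s ∈ X, ∃ a ∈ F s, t = Function.update s x a}

/-- Universal extension of a team `X` along variable `x`. -/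
def extAll (X : Team M) (x : ℕ) : Team M :=
  {t | ∃ s ∈ X, ∃ a : M, t = Function.update s x a}

/-- First-order formulas with semantic atoms depending on a finite list of variables. -/
inductive FOForm (M : Type) where
  | atom : List ℕ → (List M → Prop) → FOForm M
  | neg  : FOForm M → FOForm M
  | and  : FOForm M → FOForm M → FOForm M
  | or   : FOForm M → FOForm M → FOForm M
  | ex   : ℕ → FOForm M → FOForm M
  | all  : ℕ → FOForm M → FOForm M

/-- Tarskian (single-assignment) satisfaction for first-order formulas. -/
def FOForm.sat : FOForm M → (ℕ → M) → Prop
  | .atom l p, s => p (l.map s)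
  | .neg φ, s => ¬ FOForm.sat φ s
  | .and φ ψ, s => FOForm.sat φ s ∧ FOForm.sat ψ s
  | .or φ ψ, s => FOForm.sat φ s ∨ FOForm.sat ψ s
  | .ex x φ, s => ∃ a : M, FOForm.sat φ (Function.update s x a)
  | .all x φ, s => ∀ a : M, FOForm.sat φ (Function.update s x a)

/-- Free variables of a first-order formula. -/
def FOForm.fv : FOForm M → Set ℕ
  | .atom l _ => {v | v ∈ l}
  | .neg φ => FOForm.fv φ
  | .and φ ψ => FOForm.fv φ ∪ FOForm.fv ψ
  | .or φ ψ => FOForm.fv φ ∪ FOForm.fv ψ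
  | .ex x φ => FOForm.fv φ \ {x}
  | .all x φ => FOForm.fv φ \ {x}

/-- Formulas of inclusion logic: first-order formulas (with negation applied
only to first-order formulas), inclusion atoms, ∧, ∨, ∃, ∀. -/
inductive IncForm (M : Type) where
  | fo   : FOForm M → IncForm M
  | incl : List ℕ → List ℕ → IncForm M
  | and  : IncForm M → IncForm M → IncForm M
  | or   : IncForm M → IncForm M → IncForm M
  | ex   : ℕ → IncForm M → IncForm M
  | all  : ℕ → IncForm M → IncForm M

/-- Lax team semantics for inclusion logic. -/
def IncForm.tsat : IncForm M → Team M → Prop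
  | .fo α, X => ∀ s ∈ X, FOForm.sat α s
  | .incl xs ys, X => ∀ s ∈ X, ∃ s' ∈ X, xs.map s = ys.map s'
  | .and φ ψ, X => IncForm.tsat φ X ∧ IncForm.tsat ψ X
  | .or φ ψ, X => ∃ Y Z : Team M, X = Y ∪ Z ∧ IncForm.tsat φ Y ∧ IncForm.tsat ψ Z
  | .ex x φ, X => ∃ F : (ℕ → M) → Set M, (∀ s ∈ X, (F s).Nonempty) ∧
      IncForm.tsat φ (extT X x F)
  | .all x φ, X => IncForm.tsat φ (extAll X x)

/-- Free variables of an inclusion logic formula. -/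
def IncForm.fv : IncForm M → Set ℕ
  | .fo α => FOForm.fv α
  | .incl xs ys => {v | v ∈ xs ∨ v ∈ ys}
  | .and φ ψ => IncForm.fv φ ∪ IncForm.fv ψ
  | .or φ ψ => IncForm.fv φ ∪ IncForm.fv ψ
  | .ex x φ => IncForm.fv φ \ {x}
  | .all x φ => IncForm.fv φ \ {x}

/-- A block of existential quantifiers. -/
def IncForm.exs (l : List ℕ) (φ : IncForm M) : IncForm M := l.foldr IncForm.ex φ

/-- A block of universal quantifiers. -/
def IncForm.alls (l : List ℕ) (φ : IncForm M) : IncForm M := l.foldr IncForm.all φ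

/-! If a nonempty team satisfies `y ⊆ x ∧ R(y, x)`, every value of `x` in it has an `R`-smaller
value of `x` in it, namely the matching value of `y`. So these values form a nonempty set without
`R`-minimal elements, none of them is `R`-accessible, and a descending chain exists. Conversely,
a descending chain `a` is realised by the team of all `s[a n / x, a (n+1) / y]`, which the choice
functions `x ↦ range a` and `y ↦ {a (n+1) | x = a n}` produce. -/

open Function

theorem exists_descending_chain_of_forall_exists_rel {α : Type*} {R : α → α → Prop} {A : Set α}
    (hne : A.Nonempty) (hA : ∀ a ∈ A, ∃ b ∈ A, R b a) : ∃ f : ℕ → α, ∀ n, R (f (n + 1)) (f n) := by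
  obtain ⟨a, ha⟩ := hne
  have not_mem_of_acc : ∀ a, Acc R a → a ∉ A := fun a hacc => by
    induction hacc with
    | intro a _ ih =>
      intro ha
      obtain ⟨b, hb, hba⟩ := hA a ha
      exact ih b hba hb
  obtain ⟨f, -, hf⟩ := not_acc_iff_exists_descending_chain.mp fun hacc => not_mem_of_acc a hacc ha
  exact ⟨f, hf⟩

theorem IncForm.tsat_incl_singleton_iff {x y : ℕ} {X : Team M} :
    (IncForm.incl [y] [x]).tsat X ↔ ∀ s ∈ X, ∃ s' ∈ X, s y = s' x := by
  simp [IncForm.tsat]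

theorem IncForm.tsat_fo_atom_iff {l : List ℕ} {P : List M → Prop} {X : Team M} :
    (IncForm.fo (.atom l P)).tsat X ↔ ∀ s ∈ X, P (l.map s) :=
  Iff.rfl

theorem extT_nonempty {X : Team M} {x : ℕ} {F : (ℕ → M) → Set M} (hX : X.Nonempty)
    (hF : ∀ s ∈ X, (F s).Nonempty) : (extT X x F).Nonempty := by
  obtain ⟨s, hs⟩ := hX
  obtain ⟨a, ha⟩ := hF s hs
  exact ⟨update s x a, s, hs, a, ha, rfl⟩

theorem exists_descending_chain_of_tsat_incl_atom {x y : ℕ} {P : List M → Prop} {X : Team M}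
    (hX : X.Nonempty) (hincl : (IncForm.incl [y] [x]).tsat X)
    (hP : (IncForm.fo (.atom [y, x] P)).tsat X) :
    ∃ a : ℕ → M, ∀ n, P [a (n + 1), a n] := by
  rw [IncForm.tsat_incl_singleton_iff] at hincl
  rw [IncForm.tsat_fo_atom_iff] at hP
  refine exists_descending_chain_of_forall_exists_rel (R := fun b c => P [b, c])
    (hX.image (· x)) ?_
  rintro _ ⟨s, hs, rfl⟩
  obtain ⟨s', hs', hys⟩ := hincl s hs
  exact ⟨s' x, ⟨s', hs', rfl⟩, hys ▸ hP s hs⟩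

def chainTeam (X : Team M) (x y : ℕ) (a : ℕ → M) : Team M :=
  {t | ∃ s ∈ X, ∃ n, t = update (update s x (a n)) y (a (n + 1))}

theorem extT_extT_eq_chainTeam (X : Team M) (x y : ℕ) (a : ℕ → M) :
    extT (extT X x fun _ => Set.range a) y (fun s => {b | ∃ n, s x = a n ∧ b = a (n + 1)}) =
      chainTeam X x y a := by
  ext t
  constructor
  · rintro ⟨_, ⟨s, hs, _, ⟨m, rfl⟩, rfl⟩, _, ⟨n, hmn, rfl⟩, rfl⟩
    rw [update_self] at hmn
    exact ⟨s, hs, n, by rw [hmn]⟩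
  · rintro ⟨s, hs, n, rfl⟩
    exact ⟨_, ⟨s, hs, a n, ⟨n, rfl⟩, rfl⟩, a (n + 1), ⟨n, update_self .., rfl⟩, rfl⟩

section chainTeam

variable {X : Team M} {x y : ℕ} {a : ℕ → M}

theorem exists_of_mem_chainTeam (hxy : x ≠ y) {t : ℕ → M} (ht : t ∈ chainTeam X x y a) :
    ∃ n, t x = a n ∧ t y = a (n + 1) := by
  obtain ⟨s, -, n, rfl⟩ := ht
  exact ⟨n, by rw [update_of_ne hxy, update_self], update_self ..⟩

theorem tsat_incl_chainTeam (hxy : x ≠ y) : (IncForm.incl [y] [x]).tsat (chainTeam X x y a) := by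
  rw [IncForm.tsat_incl_singleton_iff]
  intro t ht
  obtain ⟨n, -, hty⟩ := exists_of_mem_chainTeam hxy ht
  obtain ⟨s, hs, -⟩ := ht
  refine ⟨_, ⟨s, hs, n + 1, rfl⟩, ?_⟩
  rw [hty, update_of_ne hxy, update_self]

theorem tsat_atom_chainTeam (hxy : x ≠ y) {P : List M → Prop} (ha : ∀ n, P [a (n + 1), a n]) :
    (IncForm.fo (.atom [y, x] P)).tsat (chainTeam X x y a) := by
  rw [IncForm.tsat_fo_atom_iff]
  intro t ht
  obtain ⟨n, htx, hty⟩ := exists_of_mem_chainTeam hxy ht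
  simpa [htx, hty] using ha n

end chainTeam

theorem tsat_ex_ex_incl_atom_iff {X : Team M} (hX : X.Nonempty) {x y : ℕ} (hxy : x ≠ y)
    (P : List M → Prop) :
    (IncForm.ex x (.ex y (.and (.incl [y] [x]) (.fo (.atom [y, x] P))))).tsat X ↔
      ∃ a : ℕ → M, ∀ n, P [a (n + 1), a n] := by
  constructor
  · rintro ⟨F, hF, G, hG, hincl, hP⟩
    exact exists_descending_chain_of_tsat_incl_atom (extT_nonempty (extT_nonempty hX hF) hG)
      hincl hP
  · rintro ⟨a, ha⟩
    refine ⟨fun _ => Set.range a, fun _ _ => Set.range_nonempty a,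
      fun s => {b | ∃ n, s x = a n ∧ b = a (n + 1)}, ?_, ?_⟩
    · rintro _ ⟨s, -, _, ⟨n, rfl⟩, rfl⟩
      exact ⟨a (n + 1), n, update_self .., rfl⟩
    · rw [extT_extT_eq_chainTeam]
      exact ⟨tsat_incl_chainTeam hxy, tsat_atom_chainTeam hxy ha⟩

/-- `x` is variable `0` and `y` is variable `1`; the singleton team `{s₀}` plays the role of
`{∅}`. -/
theorem inc_sentence_iff_not_wellfounded (M : Type)
    (lt : M → M → Prop)
    (s₀ : ℕ → M) :
    IncForm.tsat (.ex 0 (.ex 1 (.and (.incl [1] [0])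
        (.fo (.atom [1, 0] (fun l => match l with
          | [a, b] => lt a b
          | _ => False)))))) ({s₀} : Team M) ↔
      ∃ a : ℕ → M, ∀ n, lt (a (n + 1)) (a n) :=
  tsat_ex_ex_incl_atom_iff (Set.singleton_nonempty s₀) zero_ne_one _

end TeamSem
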